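/- Corollary (decay of the localization radii). Let j ≥ 1 be an integer and suppose K : [0,2π] → ℂ is j times continuously differentiable with K^{(i)}(0) = K^{(i)}(2π) for all 0 ≤ i ≤ j − 1. Then |n|^j · |aₙ(K)| → 0 as |n| → ∞. Consequently there exist N ∈ ℕ and, for each n ∈ ℤ with |n| ≥ N, a zero λₙ of Φ with |λₙ − n| ≤ |aₙ(K)|, which is the unique zero of Φ in the disk {λ : |λ − n| < |aₙ(K)|} when aₙ(K) ≠ 0 (and λₙ = n when aₙ(K) = 0); in particular |n|^j · |λₙ − n| → 0 as |n| → ∞. -/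

import Mathlib

open MeasureTheory Real Complex Filter

/-- `Φ(λ) = 1 − e^{2πiλ} + i ∫₀^{2π} e^{iλt} K(t) dt`. -/
noncomputable def Phi (K : ℝ → ℂ) (lam : ℂ) : ℂ :=
  1 - Complex.exp (2 * Real.pi * Complex.I * lam)
    + Complex.I * ∫ t in (0:ℝ)..(2 * Real.pi), Complex.exp (Complex.I * lam * t) * K t

/-- `aₙ(K) = (2π)^{−1/2} ∫₀^{2π} e^{int} K(t) dt`. -/
noncomputable def aCoeff (K : ℝ → ℂ) (n : ℤ) : ℂ :=
  (Real.sqrt (2 * Real.pi))⁻¹ * ∫ t in (0:ℝ)..(2 * Real.pi), Complex.exp (Complex.I * n * t) * K t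

/-!
Integrating by parts `j` times, the periodicity conditions kill the boundary terms, so that
`(in)ʲ aₙ(K)` is, up to sign, the corresponding coefficient of `K⁽ʲ⁾`, which tends to zero by the
Riemann–Lebesgue lemma.

For the zeros, `z ↦ z + Φ(z) / (2πi)` is Newton's method for `Φ` with the derivative frozen at
`-2πi`, its value at the integers when `K = 0`. Expanding the exponentials to first order about
`n`, its Lipschitz constant on the disc of radius `|aₙ(K)|` about `n` is bounded in terms of
`|aₙ(K)|` and `|∫₀^{2π} e^{int} t K(t) dt|`, both of which tend to zero by Riemann–Lebesgue, while
the map moves `n` only by `|aₙ(K)| / √(2π)`. For large `|n|` it is therefore a contraction of that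
disc, and its unique fixed point is the unique zero of `Φ` in the disc.
-/

open Set Metric Topology intervalIntegral

theorem norm_exp_sub_one_le_norm_mul_exp (z : ℂ) : ‖cexp z - 1‖ ≤ ‖z‖ * rexp ‖z‖ := by
  have hbound : ∀ w ∈ closedBall (0 : ℂ) ‖z‖, ‖cexp w‖ ≤ rexp ‖z‖ := fun w hw =>
    (norm_exp_le_exp_norm w).trans (Real.exp_le_exp.2 (mem_closedBall_zero_iff.1 hw))
  simpa [mul_comm] using
    (convex_closedBall (0 : ℂ) ‖z‖).norm_image_sub_le_of_norm_hasDerivWithin_le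
      (fun w _ => (Complex.hasDerivAt_exp w).hasDerivWithinAt) hbound
      (mem_closedBall_self (norm_nonneg z)) (mem_closedBall_zero_iff.2 le_rfl)

theorem norm_exp_sub_exp_sub_sub_le {a b : ℂ} {ρ : ℝ} (ha : ‖a‖ ≤ ρ) (hb : ‖b‖ ≤ ρ) :
    ‖cexp a - cexp b - (a - b)‖ ≤ ρ * rexp ρ * ‖a - b‖ := by
  have hbound : ∀ w ∈ closedBall (0 : ℂ) ρ, ‖cexp w - 1‖ ≤ ρ * rexp ρ := fun w hw => by
    have hw : ‖w‖ ≤ ρ := mem_closedBall_zero_iff.1 hw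
    exact (norm_exp_sub_one_le_norm_mul_exp w).trans
      (mul_le_mul hw (Real.exp_le_exp.2 hw) (Real.exp_pos _).le ((norm_nonneg w).trans hw))
  have := (convex_closedBall (0 : ℂ) ρ).norm_image_sub_le_of_norm_hasDerivWithin_le
    (fun w _ => ((Complex.hasDerivAt_exp w).sub (hasDerivAt_id w)).hasDerivWithinAt) hbound
    (mem_closedBall_zero_iff.2 hb) (mem_closedBall_zero_iff.2 ha)
  rwa [Pi.sub_apply, Pi.sub_apply, id, id, sub_sub_sub_comm] at this

theorem norm_two_pi_I : ‖(2 * π * I : ℂ)‖ = 2 * π := by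
  simp [abs_of_pos pi_pos]

theorem exp_two_pi_I_mul_sub_intCast (z : ℂ) (n : ℤ) :
    cexp (2 * π * I * (z - n)) = cexp (2 * π * I * z) := by
  rw [mul_sub, Complex.exp_sub, show 2 * π * I * n = n * (2 * π * I) by ring,
    Complex.exp_int_mul_two_pi_mul_I, div_one]

theorem LipschitzOnWith.existsUnique_isFixedPt_closedBall {E : Type*} [MetricSpace E]
    [CompleteSpace E] {f : E → E} {K : NNReal} {c : E} {r : ℝ} (hK : K < 1)
    (hf : LipschitzOnWith K f (closedBall c r)) (hc : dist (f c) c ≤ (1 - K) * r) :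
    ∃! x, x ∈ closedBall c r ∧ Function.IsFixedPt f x := by
  have hr : 0 ≤ r := nonneg_of_mul_nonneg_right (dist_nonneg.trans hc) (sub_pos.2 hK)
  have hmaps : MapsTo f (closedBall c r) (closedBall c r) := fun x hx => calc
    dist (f x) c ≤ dist (f x) (f c) + dist (f c) c := dist_triangle _ _ _
    _ ≤ K * r + (1 - K) * r := by
      gcongr
      exact (hf.dist_le_mul x hx c (mem_closedBall_self hr)).trans
        (mul_le_mul_of_nonneg_left hx K.2)
    _ = r := by ring
  have hcontr : ContractingWith K (hmaps.restrict f _ _) := ⟨hK, hf.mapsToRestrict hmaps⟩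
  obtain ⟨x, hx, hfix, -⟩ := hcontr.exists_fixedPoint' isClosed_closedBall.isComplete hmaps
    (mem_closedBall_self hr) (edist_ne_top _ _)
  refine ⟨x, ⟨hx, hfix⟩, fun y ⟨hy, hyfix⟩ => dist_le_zero.1 ?_⟩
  have := hf.dist_le_mul y hy x hx
  rw [hyfix.eq, hfix.eq] at this
  nlinarith [dist_nonneg (x := y) (y := x), show (K : ℝ) < 1 from hK]

theorem Int.eventually_cofinite_iff_exists_forall_le_abs {p : ℤ → Prop} :
    (∀ᶠ n in cofinite, p n) ↔ ∃ N : ℕ, ∀ n : ℤ, (N : ℤ) ≤ |n| → p n := by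
  rw [Int.cofinite_eq, eventually_sup, eventually_atBot, eventually_atTop]
  constructor
  · rintro ⟨⟨a, ha⟩, ⟨b, hb⟩⟩
    refine ⟨(max (-a) b).toNat, fun n hn => ?_⟩
    rcases abs_cases n with ⟨h, -⟩ | ⟨h, -⟩ <;> [exact hb n (by omega); exact ha n (by omega)]
  · rintro ⟨N, hN⟩
    exact ⟨⟨-N, fun n hn => hN n (by rw [abs_of_nonpos (by omega)]; omega)⟩,
      ⟨N, fun n hn => hN n (by rw [abs_of_nonneg (by omega)]; omega)⟩⟩

noncomputable def fourierLaplace (K : ℝ → ℂ) (z : ℂ) : ℂ :=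
  ∫ t in (0:ℝ)..(2 * π), cexp (I * z * t) * K t

theorem Phi_eq_fourierLaplace (K : ℝ → ℂ) (z : ℂ) :
    Phi K z = 1 - cexp (2 * π * I * z) + I * fourierLaplace K z := rfl

theorem aCoeff_eq_fourierLaplace (K : ℝ → ℂ) (n : ℤ) :
    aCoeff K n = (√(2 * π) : ℂ)⁻¹ * fourierLaplace K n := by
  simp [aCoeff, fourierLaplace]

theorem Phi_intCast (K : ℝ → ℂ) (n : ℤ) : Phi K n = I * fourierLaplace K n := by
  rw [Phi_eq_fourierLaplace, show 2 * π * I * n = n * (2 * π * I) by ring,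
    Complex.exp_int_mul_two_pi_mul_I, sub_self, zero_add]

theorem tendsto_fourierLaplace_cocompact (K : ℝ → ℂ) :
    Tendsto (fun w : ℝ => fourierLaplace K w) (cocompact ℝ) (𝓝 0) := by
  have hscale : Tendsto (fun w : ℝ => -(2 * π)⁻¹ * w) (cocompact ℝ) (cocompact ℝ) :=
    (Homeomorph.mulLeft₀ _ (by simp [pi_ne_zero])).toCocompactMap.cocompact_tendsto'
  convert (Real.tendsto_integral_exp_smul_cocompact ((Ioc 0 (2 * π)).indicator K)).comp hscale
    using 1
  ext w
  rw [Function.comp_apply, fourierLaplace, integral_of_le two_pi_pos.le,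
    ← MeasureTheory.integral_indicator measurableSet_Ioc]
  congr 1 with v
  by_cases hv : v ∈ Ioc 0 (2 * π)
  · simp only [indicator_of_mem hv, Circle.smul_def, Real.fourierChar_apply]
    congr 2
    push_cast
    field_simp
  · simp [hv]

theorem tendsto_fourierLaplace_intCast (K : ℝ → ℂ) :
    Tendsto (fun n : ℤ => fourierLaplace K n) cofinite (𝓝 0) := by
  simpa [Function.comp_def] using
    (tendsto_fourierLaplace_cocompact K).comp Int.tendsto_coe_cofinite

theorem fourierLaplace_intCast_of_hasDerivWithinAt {f f' : ℝ → ℂ}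
    (hf : ∀ x ∈ Icc 0 (2 * π), HasDerivWithinAt f (f' x) (Icc 0 (2 * π)) x)
    (hf' : IntervalIntegrable f' volume 0 (2 * π)) (hper : f 0 = f (2 * π)) (n : ℤ) :
    fourierLaplace f' n = -(I * n) * fourierLaplace f n := by
  have hexp (x : ℝ) :
      HasDerivAt (fun t : ℝ => cexp (I * n * t)) (I * n * cexp (I * n * x)) x := by
    simpa [mul_comm] using ((hasDerivAt_id (x : ℂ)).const_mul (I * n)).cexp.comp_ofReal
  have hexp_two_pi : cexp (I * n * (2 * π : ℝ)) = 1 := by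
    rw [← Complex.exp_int_mul_two_pi_mul_I n]; push_cast; ring_nf
  rw [← uIcc_of_le two_pi_pos.le] at hf
  have := integral_mul_deriv_eq_deriv_mul_of_hasDerivWithinAt
    (fun x _ => (hexp x).hasDerivWithinAt) hf
    ((Continuous.continuousOn (by fun_prop)).intervalIntegrable) hf'
  simp only [fourierLaplace]
  rw [this, hexp_two_pi, ← hper]
  simp only [ofReal_zero, mul_zero, Complex.exp_zero, one_mul, sub_self, zero_sub, mul_assoc,
    intervalIntegral.integral_const_mul, neg_mul]

theorem fourierLaplace_intCast_iteratedDerivWithin {K : ℝ → ℂ} {j : ℕ}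
    (hK : ContDiffOn ℝ j K (Icc 0 (2 * π)))
    (hper : ∀ i < j, iteratedDerivWithin i K (Icc 0 (2 * π)) 0 =
      iteratedDerivWithin i K (Icc 0 (2 * π)) (2 * π))
    (n : ℤ) {i : ℕ} (hi : i ≤ j) :
    fourierLaplace (iteratedDerivWithin i K (Icc 0 (2 * π))) n =
      (-(I * n)) ^ i * fourierLaplace K n := by
  have huniq : UniqueDiffOn ℝ (Icc (0:ℝ) (2 * π)) := uniqueDiffOn_Icc two_pi_pos
  induction i with
  | zero => simp
  | succ i ih =>
    have hij : i < j := hi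
    have hderiv : ∀ x ∈ Icc 0 (2 * π), HasDerivWithinAt (iteratedDerivWithin i K (Icc 0 (2 * π)))
        (iteratedDerivWithin (i + 1) K (Icc 0 (2 * π)) x) (Icc 0 (2 * π)) x := fun x hx => by
      rw [iteratedDerivWithin_succ]
      exact (hK.differentiableOn_iteratedDerivWithin (by exact_mod_cast hij) huniq x hx
        ).hasDerivWithinAt
    rw [fourierLaplace_intCast_of_hasDerivWithinAt hderiv
      ((hK.continuousOn_iteratedDerivWithin (by exact_mod_cast hi) huniq).intervalIntegrable_of_Icc
        two_pi_pos.le) (hper i hij), ih hij.le, pow_succ', mul_assoc]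

theorem tendsto_abs_pow_mul_norm_aCoeff {K : ℝ → ℂ} {j : ℕ}
    (hK : ContDiffOn ℝ j K (Icc 0 (2 * π)))
    (hper : ∀ i < j, iteratedDerivWithin i K (Icc 0 (2 * π)) 0 =
      iteratedDerivWithin i K (Icc 0 (2 * π)) (2 * π)) :
    Tendsto (fun n : ℤ => (|n| : ℝ) ^ j * ‖aCoeff K n‖) cofinite (𝓝 0) := by
  have key (n : ℤ) : (|n| : ℝ) ^ j * ‖aCoeff K n‖ =
      (√(2 * π))⁻¹ * ‖fourierLaplace (iteratedDerivWithin j K (Icc 0 (2 * π))) n‖ := by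
    rw [fourierLaplace_intCast_iteratedDerivWithin hK hper n le_rfl, aCoeff_eq_fourierLaplace]
    simp only [norm_mul, norm_pow, norm_neg, norm_I, one_mul, norm_intCast, norm_inv, norm_real,
      norm_eq_abs, abs_of_nonneg (sqrt_nonneg _)]
    ring
  simpa [key] using ((tendsto_fourierLaplace_intCast _).norm.const_mul (√(2 * π))⁻¹)

theorem norm_fourierLaplace_sub_sub_le {K : ℝ → ℂ} (hK : IntervalIntegrable K volume 0 (2 * π))
    {x r : ℝ} {z₁ z₂ : ℂ} (h₁ : ‖z₁ - x‖ ≤ r) (h₂ : ‖z₂ - x‖ ≤ r) :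
    ‖fourierLaplace K z₁ - fourierLaplace K z₂
        - I * (z₁ - z₂) * fourierLaplace (fun t => t * K t) x‖
      ≤ 2 * π * r * rexp (2 * π * r) * (2 * π * ‖z₁ - z₂‖) * ∫ t in (0:ℝ)..(2 * π), ‖K t‖ := by
  have hr : 0 ≤ r := (norm_nonneg _).trans h₁
  set C := 2 * π * r * rexp (2 * π * r) * (2 * π * ‖z₁ - z₂‖)
  have hE (z : ℂ) : IntervalIntegrable (fun t : ℝ => cexp (I * z * t) * K t) volume 0 (2 * π) :=
    hK.continuousOn_mul (Continuous.continuousOn (by fun_prop))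
  have hT : IntervalIntegrable (fun t : ℝ => cexp (I * x * t) * (t * K t)) volume 0 (2 * π) := by
    simpa only [mul_assoc] using
      hK.continuousOn_mul (g := fun t : ℝ => cexp (I * x * t) * t) (by fun_prop)
  have hpoint : ∀ t ∈ Ioc 0 (2 * π), ‖cexp (I * z₁ * t) * K t - cexp (I * z₂ * t) * K t
      - I * (z₁ - z₂) * (cexp (I * x * t) * (t * K t))‖ ≤ C * ‖K t‖ := by
    rintro t ⟨ht₀, ht⟩
    set a₁ := I * (z₁ - x) * t
    set a₂ := I * (z₂ - x) * t
    have hsplit : ∀ z : ℂ, cexp (I * z * t) = cexp (I * x * t) * cexp (I * (z - x) * t) :=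
      fun z => by rw [← Complex.exp_add]; ring_nf
    have hnorm : ∀ z : ℂ, ‖I * z * t‖ = ‖z‖ * t := fun z => by
      simp [abs_of_pos ht₀]
    have hrewrite : cexp (I * z₁ * t) * K t - cexp (I * z₂ * t) * K t
        - I * (z₁ - z₂) * (cexp (I * x * t) * (t * K t))
        = cexp (I * x * t) * (cexp a₁ - cexp a₂ - (a₁ - a₂)) * K t := by
      rw [hsplit z₁, hsplit z₂]; ring
    have hρ : ∀ z : ℂ, ‖z - x‖ ≤ r → ‖I * (z - x) * t‖ ≤ 2 * π * r := fun z hz => by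
      rw [hnorm]; nlinarith [norm_nonneg (z - x)]
    have hdiff : ‖a₁ - a₂‖ ≤ 2 * π * ‖z₁ - z₂‖ := by
      rw [show a₁ - a₂ = I * (z₁ - z₂) * t by ring, hnorm]
      nlinarith [norm_nonneg (z₁ - z₂)]
    rw [hrewrite, norm_mul, norm_mul, show I * x * t = I * ((x * t : ℝ) : ℂ) by push_cast; ring,
      norm_exp_I_mul_ofReal, one_mul]
    gcongr
    exact (norm_exp_sub_exp_sub_sub_le (hρ z₁ h₁) (hρ z₂ h₂)).trans
      (mul_le_mul_of_nonneg_left hdiff (by positivity))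
  calc _ = ‖∫ t in (0:ℝ)..(2 * π), (cexp (I * z₁ * t) * K t - cexp (I * z₂ * t) * K t
        - I * (z₁ - z₂) * (cexp (I * x * t) * (t * K t)))‖ := by
        rw [intervalIntegral.integral_sub ((hE z₁).sub (hE z₂)) (hT.const_mul _),
          intervalIntegral.integral_sub (hE z₁) (hE z₂), intervalIntegral.integral_const_mul]
        rfl
    _ ≤ ∫ t in (0:ℝ)..(2 * π), C * ‖K t‖ :=
        norm_integral_le_of_norm_le two_pi_pos.le (Eventually.of_forall hpoint)
          (hK.norm.const_mul C)
    _ = C * ∫ t in (0:ℝ)..(2 * π), ‖K t‖ := integral_const_mul C _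

noncomputable def newtonMap (K : ℝ → ℂ) (z : ℂ) : ℂ :=
  z + Phi K z / (2 * π * I)

theorem isFixedPt_newtonMap_iff {K : ℝ → ℂ} {z : ℂ} :
    Function.IsFixedPt (newtonMap K) z ↔ Phi K z = 0 := by
  simp [Function.IsFixedPt, newtonMap, pi_ne_zero, I_ne_zero]

noncomputable def newtonLipConst (K : ℝ → ℂ) (n : ℤ) (r : ℝ) : ℝ :=
  2 * π * r * rexp (2 * π * r) * (1 + ∫ t in (0:ℝ)..(2 * π), ‖K t‖)
    + ‖fourierLaplace (fun t => t * K t) n‖ / (2 * π)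

theorem norm_newtonMap_sub_le {K : ℝ → ℂ} (hK : IntervalIntegrable K volume 0 (2 * π)) (n : ℤ)
    {r : ℝ} {z₁ z₂ : ℂ} (h₁ : ‖z₁ - n‖ ≤ r) (h₂ : ‖z₂ - n‖ ≤ r) :
    ‖newtonMap K z₁ - newtonMap K z₂‖ ≤ newtonLipConst K n r * ‖z₁ - z₂‖ := by
  set b := fourierLaplace (fun t => t * K t) n
  set a₁ := 2 * π * I * (z₁ - n)
  set a₂ := 2 * π * I * (z₂ - n)
  have hρ : ∀ z : ℂ, ‖z - n‖ ≤ r → ‖2 * π * I * (z - n)‖ ≤ 2 * π * r := fun z hz => by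
    rw [norm_mul, norm_two_pi_I]; gcongr
  have hdiff : ‖a₁ - a₂‖ = 2 * π * ‖z₁ - z₂‖ := by
    rw [show a₁ - a₂ = 2 * π * I * (z₁ - z₂) by ring, norm_mul, norm_two_pi_I]
  have hexp : ‖cexp a₁ - cexp a₂ - (a₁ - a₂)‖
      ≤ 2 * π * r * rexp (2 * π * r) * (2 * π * ‖z₁ - z₂‖) :=
    hdiff ▸ norm_exp_sub_exp_sub_sub_le (hρ z₁ h₁) (hρ z₂ h₂)
  have hlin : ‖fourierLaplace K z₁ - fourierLaplace K z₂ - I * (z₁ - z₂) * b‖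
      ≤ 2 * π * r * rexp (2 * π * r) * (2 * π * ‖z₁ - z₂‖) * ∫ t in (0:ℝ)..(2 * π), ‖K t‖ := by
    simpa using
      norm_fourierLaplace_sub_sub_le hK (x := n) (by simpa using h₁) (by simpa using h₂)
  have hsplit : 2 * π * I * (newtonMap K z₁ - newtonMap K z₂)
      = -(cexp a₁ - cexp a₂ - (a₁ - a₂))
        + I * (fourierLaplace K z₁ - fourierLaplace K z₂ - I * (z₁ - z₂) * b)
        - (z₁ - z₂) * b := by
    simp only [newtonMap, Phi_eq_fourierLaplace, a₁, a₂, exp_two_pi_I_mul_sub_intCast]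
    field_simp
    linear_combination (z₁ - z₂) * b * I_sq
  refine le_of_mul_le_mul_left ?_ two_pi_pos
  calc 2 * π * ‖newtonMap K z₁ - newtonMap K z₂‖
      = ‖2 * π * I * (newtonMap K z₁ - newtonMap K z₂)‖ := by rw [norm_mul, norm_two_pi_I]
    _ ≤ ‖cexp a₁ - cexp a₂ - (a₁ - a₂)‖
        + ‖fourierLaplace K z₁ - fourierLaplace K z₂ - I * (z₁ - z₂) * b‖ + ‖z₁ - z₂‖ * ‖b‖ := by
      rw [hsplit]
      refine (norm_sub_le _ _).trans (add_le_add ((norm_add_le _ _).trans_eq ?_) (norm_mul _ _).le)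
      rw [norm_neg, norm_mul, norm_I, one_mul]
    _ ≤ 2 * π * r * rexp (2 * π * r) * (2 * π * ‖z₁ - z₂‖)
        + 2 * π * r * rexp (2 * π * r) * (2 * π * ‖z₁ - z₂‖) * (∫ t in (0:ℝ)..(2 * π), ‖K t‖)
        + ‖z₁ - z₂‖ * ‖b‖ := by
      gcongr
    _ = 2 * π * (newtonLipConst K n r * ‖z₁ - z₂‖) := by
      simp only [newtonLipConst, b]; field_simp

theorem dist_newtonMap_intCast_le (K : ℝ → ℂ) (n : ℤ) :
    dist (newtonMap K n) n ≤ ‖aCoeff K n‖ / 2 := by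
  have hs : 2 ≤ √(2 * π) := (Real.le_sqrt' (by norm_num)).2 (by nlinarith [pi_gt_three])
  have hs_sq : √(2 * π) * √(2 * π) = 2 * π := mul_self_sqrt two_pi_pos.le
  rw [dist_eq_norm, newtonMap, add_sub_cancel_left, Phi_intCast, aCoeff_eq_fourierLaplace, norm_div,
    norm_two_pi_I, norm_mul, norm_I, one_mul, norm_mul, norm_inv, norm_real,
    norm_of_nonneg (sqrt_nonneg _)]
  calc ‖fourierLaplace K n‖ / (2 * π)
      = (√(2 * π))⁻¹ * ‖fourierLaplace K n‖ / √(2 * π) := by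
        nth_rw 1 [← hs_sq]; field_simp
    _ ≤ (√(2 * π))⁻¹ * ‖fourierLaplace K n‖ / 2 :=
        div_le_div_of_nonneg_left (by positivity) (by norm_num) hs

theorem existsUnique_Phi_eq_zero_mem_closedBall {K : ℝ → ℂ}
    (hK : IntervalIntegrable K volume 0 (2 * π)) {n : ℤ}
    (hn : newtonLipConst K n ‖aCoeff K n‖ ≤ 1 / 2) :
    ∃! z, z ∈ closedBall (n : ℂ) ‖aCoeff K n‖ ∧ Phi K z = 0 := by
  have hlip : LipschitzOnWith (1 / 2) (newtonMap K) (closedBall (n : ℂ) ‖aCoeff K n‖) :=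
    LipschitzOnWith.of_dist_le_mul fun z₁ h₁ z₂ h₂ => by
      rw [dist_eq_norm, dist_eq_norm]
      push_cast
      exact (norm_newtonMap_sub_le hK n (mem_closedBall_iff_norm.1 h₁)
        (mem_closedBall_iff_norm.1 h₂)).trans (by gcongr)
  simpa only [isFixedPt_newtonMap_iff] using
    hlip.existsUnique_isFixedPt_closedBall (by norm_num)
      ((dist_newtonMap_intCast_le K n).trans_eq (by norm_num; ring))

theorem tendsto_newtonLipConst (K : ℝ → ℂ) :
    Tendsto (fun n : ℤ => newtonLipConst K n ‖aCoeff K n‖) cofinite (𝓝 0) := by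
  have ha : Tendsto (fun n : ℤ => ‖aCoeff K n‖) cofinite (𝓝 0) := by
    simpa only [aCoeff_eq_fourierLaplace, mul_zero, norm_zero] using
      ((tendsto_fourierLaplace_intCast K).const_mul _).norm
  have hcont : Continuous fun r : ℝ =>
      2 * π * r * rexp (2 * π * r) * (1 + ∫ t in (0:ℝ)..(2 * π), ‖K t‖) := by fun_prop
  simpa only [newtonLipConst, Function.comp_def, norm_zero, zero_div, add_zero] using
    ((hcont.tendsto' 0 0 (by simp)).comp ha).add
      ((tendsto_fourierLaplace_intCast fun t => t * K t).norm.div_const (2 * π))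

theorem radii_decay_of_smooth_K_general
    (K : ℝ → ℂ) (j : ℕ)
    (hK : ContDiffOn ℝ j K (Set.Icc 0 (2 * Real.pi)))
    (hper : ∀ i : ℕ, i ≤ j - 1 →
      iteratedDerivWithin i K (Set.Icc 0 (2 * Real.pi)) 0 =
        iteratedDerivWithin i K (Set.Icc 0 (2 * Real.pi)) (2 * Real.pi)) :
    Tendsto (fun n : ℤ => (|n| : ℝ) ^ j * ‖aCoeff K n‖) cofinite (nhds 0) ∧
    ∃ (N : ℕ) (lam : ℤ → ℂ),
      (∀ n : ℤ, (N : ℤ) ≤ |n| →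
        Phi K (lam n) = 0 ∧
        ‖lam n - n‖ ≤ ‖aCoeff K n‖ ∧
        (aCoeff K n ≠ 0 →
          ∀ μ : ℂ, ‖μ - n‖ < ‖aCoeff K n‖ → Phi K μ = 0 → μ = lam n) ∧
        (aCoeff K n = 0 → lam n = n)) ∧
      Tendsto (fun n : ℤ => (|n| : ℝ) ^ j * ‖lam n - n‖) cofinite (nhds 0) := by
  have hdecay := tendsto_abs_pow_mul_norm_aCoeff hK fun i hi => hper i (by omega)
  obtain ⟨N, hN⟩ := Int.eventually_cofinite_iff_exists_forall_le_abs.1 <|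
    (tendsto_newtonLipConst K).eventually (eventually_le_nhds (by norm_num : (0 : ℝ) < 1 / 2))
  have hzero (n : ℤ) : ∃ z, (N : ℤ) ≤ |n| →
      (z ∈ closedBall (n : ℂ) ‖aCoeff K n‖ ∧ Phi K z = 0) ∧
        ∀ μ, μ ∈ closedBall (n : ℂ) ‖aCoeff K n‖ ∧ Phi K μ = 0 → μ = z := by
    by_cases hn : (N : ℤ) ≤ |n|
    · obtain ⟨z, hz⟩ := existsUnique_Phi_eq_zero_mem_closedBall
        (hK.continuousOn.intervalIntegrable_of_Icc two_pi_pos.le) (hN n hn)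
      exact ⟨z, fun _ => hz⟩
    · exact ⟨0, fun h => absurd h hn⟩
  choose lam hlam using hzero
  have hclose (n : ℤ) (hn : (N : ℤ) ≤ |n|) : ‖lam n - n‖ ≤ ‖aCoeff K n‖ :=
    mem_closedBall_iff_norm.1 (hlam n hn).1.1
  refine ⟨hdecay, N, lam, fun n hn => ⟨(hlam n hn).1.2, hclose n hn,
    fun _ μ hμ hμ0 => (hlam n hn).2 μ ⟨mem_closedBall_iff_norm.2 hμ.le, hμ0⟩,
    fun ha => by simpa [ha, sub_eq_zero] using hclose n hn⟩, ?_⟩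
  refine squeeze_zero' (Eventually.of_forall fun n => by positivity) ?_ hdecay
  filter_upwards [Int.eventually_cofinite_iff_exists_forall_le_abs.2 ⟨N, fun n hn => hn⟩]
    with n hn
  exact mul_le_mul_of_nonneg_left (hclose n hn) (by positivity)

/-- Corollary (decay of the localization radii): if `K` is `j` times continuously
differentiable on `[0,2π]` with `K^{(i)}(0) = K^{(i)}(2π)` for `0 ≤ i ≤ j − 1`, then
`|n|^j |aₙ(K)| → 0`; consequently there are zeros `λₙ` of `Φ` with `|λₙ − n| ≤ |aₙ(K)|`
(unique in the corresponding disk, resp. `λₙ = n` when `aₙ(K) = 0`), and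
`|n|^j |λₙ − n| → 0` as `|n| → ∞`. -/
theorem radii_decay_of_smooth_K
    (K : ℝ → ℂ) (j : ℕ) (hj : 1 ≤ j)
    (hK : ContDiffOn ℝ j K (Set.Icc 0 (2 * Real.pi)))
    (hper : ∀ i : ℕ, i ≤ j - 1 →
      iteratedDerivWithin i K (Set.Icc 0 (2 * Real.pi)) 0 =
        iteratedDerivWithin i K (Set.Icc 0 (2 * Real.pi)) (2 * Real.pi)) :
    Tendsto (fun n : ℤ => (|n| : ℝ) ^ j * ‖aCoeff K n‖) cofinite (nhds 0) ∧
    ∃ (N : ℕ) (lam : ℤ → ℂ),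
      (∀ n : ℤ, (N : ℤ) ≤ |n| →
        Phi K (lam n) = 0 ∧
        ‖lam n - n‖ ≤ ‖aCoeff K n‖ ∧
        (aCoeff K n ≠ 0 →
          ∀ μ : ℂ, ‖μ - n‖ < ‖aCoeff K n‖ → Phi K μ = 0 → μ = lam n) ∧
        (aCoeff K n = 0 → lam n = n)) ∧
      Tendsto (fun n : ℤ => (|n| : ℝ) ^ j * ‖lam n - n‖) cofinite (nhds 0) :=
  radii_decay_of_smooth_K_general K j hK hper
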